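/- arXiv:0906.3392 — 6 statements merged into one kernel-verified Lean document; each statement's English description precedes it below -/
import Mathlib

section
/- Let Ξ : ℝ≥0 → Matrix(n,n,ℝ) be continuous with Ξ(t+s) = Ξ(t)·Ξ(s) for all s,t ≥ 0 and Ξ(0) = id. Then there exists a real n×n matrix β such that Ξ(t) = exp(tβ) for all t ≥ 0. -/
/-!
For small `δ > 0` the average `δ⁻¹ ∫₀^δ Ξ` is close to `Ξ 0 = 1`, so `∫₀^δ Ξ` is invertible.
The semigroup law gives `Ξ t * ∫₀^δ Ξ = ∫ₜ^{t+δ} Ξ`, hence `Ξ t = (∫ₜ^{t+δ} Ξ) (∫₀^δ Ξ)⁻¹`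
is differentiable, with `Ξ' = Ξ β` for `β = (Ξ δ - 1) (∫₀^δ Ξ)⁻¹`. Uniqueness of solutions of
the linear equation `x' = x β` then forces `Ξ t = exp (t β)`.
-/

open Set Filter Topology intervalIntegral

section BanachAlgebra

variable {A : Type*} [NormedRing A] [NormedAlgebra ℝ A] [CompleteSpace A]

theorem exists_pos_isUnit_intervalIntegral {Φ : ℝ → A} (hΦ : Continuous Φ)
    (h0 : IsUnit (Φ 0)) : ∃ δ > 0, IsUnit (∫ s in (0 : ℝ)..δ, Φ s) := by
  have hslope : Tendsto (fun δ : ℝ => δ⁻¹ • ∫ s in (0 : ℝ)..δ, Φ s) (𝓝[>] 0) (𝓝 (Φ 0)) := by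
    simpa using (hΦ.integral_hasStrictDerivAt 0 0).hasDerivAt.tendsto_slope_zero_right
  obtain ⟨δ, hunit, hδ⟩ :=
    ((hslope.eventually (h0.unit_spec ▸ Units.nhds h0.unit)).and self_mem_nhdsWithin).exists
  refine ⟨δ, hδ, ?_⟩
  rw [← smul_inv_smul₀ hδ.ne' (∫ s in (0 : ℝ)..δ, Φ s), Algebra.smul_def]
  exact ((isUnit_iff_ne_zero.mpr hδ.ne').map _).mul hunit

variable {Φ : ℝ → A}

theorem mul_intervalIntegral_eq_of_semigroup (hΦ : Continuous Φ)
    (hmul : ∀ t ∈ Ici (0 : ℝ), ∀ s ∈ Ici (0 : ℝ), Φ (t + s) = Φ t * Φ s)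
    {t δ : ℝ} (ht : 0 ≤ t) (hδ : 0 ≤ δ) :
    Φ t * ∫ s in (0 : ℝ)..δ, Φ s = ∫ s in t..t + δ, Φ s :=
  calc Φ t * ∫ s in (0 : ℝ)..δ, Φ s = ∫ s in (0 : ℝ)..δ, Φ t * Φ s :=
        ((ContinuousLinearMap.mul ℝ A (Φ t)).intervalIntegral_comp_comm
          (hΦ.intervalIntegrable 0 δ)).symm
    _ = ∫ s in (0 : ℝ)..δ, Φ (t + s) := integral_congr fun s hs =>
        (hmul t ht s (by rw [uIcc_of_le hδ] at hs; exact hs.1)).symm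
    _ = ∫ s in t..t + δ, Φ s := by simp [integral_comp_add_left Φ t]

theorem exists_hasDerivWithinAt_mul_of_semigroup (hΦ : Continuous Φ)
    (hmul : ∀ t ∈ Ici (0 : ℝ), ∀ s ∈ Ici (0 : ℝ), Φ (t + s) = Φ t * Φ s) (h0 : Φ 0 = 1) :
    ∃ β : A, ∀ t ∈ Ici (0 : ℝ), HasDerivWithinAt Φ (Φ t * β) (Ici 0) t := by
  obtain ⟨δ, hδ, u, hu⟩ := exists_pos_isUnit_intervalIntegral hΦ (h0 ▸ isUnit_one)
  set G : ℝ → A := fun t => ∫ s in (0 : ℝ)..t, Φ s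
  have hG (t : ℝ) : HasDerivAt G (Φ t) t := (hΦ.integral_hasStrictDerivAt 0 t).hasDerivAt
  have hΦ_eq : EqOn Φ (fun t => (G (t + δ) - G t) * ↑u⁻¹) (Ici 0) := fun t ht => by
    simp only [G]
    rw [integral_interval_sub_left (hΦ.intervalIntegrable _ _) (hΦ.intervalIntegrable _ _),
      ← mul_intervalIntegral_eq_of_semigroup hΦ hmul ht hδ.le, ← hu, Units.mul_inv_cancel_right]
  refine ⟨(Φ δ - 1) * ↑u⁻¹, fun t ht => ?_⟩
  have hderiv := (((hG (t + δ)).comp_add_const t δ).sub (hG t)).mul_const (↑u⁻¹ : A)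
  rw [← mul_assoc, mul_sub, mul_one, ← hmul t ht δ hδ.le]
  exact hderiv.hasDerivWithinAt.congr hΦ_eq (hΦ_eq ht)

theorem eq_exp_smul_of_hasDerivWithinAt_mul {β : A} (hΦ : ContinuousOn Φ (Ici 0))
    (hderiv : ∀ t ∈ Ici (0 : ℝ), HasDerivWithinAt Φ (Φ t * β) (Ici t) t) (h0 : Φ 0 = 1) :
    ∀ t ∈ Ici (0 : ℝ), Φ t = NormedSpace.exp (t • β) := fun t ht =>
  ODE_solution_unique_of_mem_Icc_right (v := fun _ x => x * β) (s := fun _ => univ)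
    (fun _ _ => ((ContinuousLinearMap.mul ℝ A).flip β).lipschitz.lipschitzOnWith)
    (hΦ.mono Icc_subset_Ici_self) (fun s hs => hderiv s hs.1) (fun _ _ => trivial)
    (differentiable_exp_smul_const ℝ β).continuous.continuousOn
    (fun s _ => (hasDerivAt_exp_smul_const β s).hasDerivWithinAt) (fun _ _ => trivial)
    (by simp [h0]) ⟨ht, le_rfl⟩

theorem exists_eq_exp_smul_of_semigroup {Ξ : ℝ → A} (hcont : ContinuousOn Ξ (Ici 0))
    (hmul : ∀ t ∈ Ici (0 : ℝ), ∀ s ∈ Ici (0 : ℝ), Ξ (t + s) = Ξ t * Ξ s) (h0 : Ξ 0 = 1) :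
    ∃ β : A, ∀ t ∈ Ici (0 : ℝ), Ξ t = NormedSpace.exp (t • β) := by
  set Φ : ℝ → A := fun t => Ξ (max t 0)
  have hΦ : Continuous Φ :=
    hcont.comp_continuous (continuous_id.max continuous_const) fun t => le_max_right t 0
  have hΦΞ : EqOn Φ Ξ (Ici 0) := fun t ht => congrArg Ξ (max_eq_left ht)
  have hΦmul : ∀ t ∈ Ici (0 : ℝ), ∀ s ∈ Ici (0 : ℝ), Φ (t + s) = Φ t * Φ s :=
    fun t ht s hs => by
      rw [hΦΞ ht, hΦΞ hs, hΦΞ (mem_Ici.mpr (add_nonneg ht hs))]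
      exact hmul t ht s hs
  obtain ⟨β, hβ⟩ := exists_hasDerivWithinAt_mul_of_semigroup hΦ hΦmul ((hΦΞ self_mem_Ici).trans h0)
  refine ⟨β, eq_exp_smul_of_hasDerivWithinAt_mul hcont (fun t ht => ?_) h0⟩
  have hΞ := (hβ t ht).mono (Ici_subset_Ici.mpr ht)
  rw [hΦΞ ht] at hΞ
  exact hΞ.congr (hΦΞ.symm.mono (Ici_subset_Ici.mpr ht)) (hΦΞ ht).symm

end BanachAlgebra

theorem stmt2 (n : ℕ) (Ξ : ℝ → Matrix (Fin n) (Fin n) ℝ)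
    (hcont : ContinuousOn Ξ (Set.Ici 0))
    (hmul : ∀ t ∈ Set.Ici (0:ℝ), ∀ s ∈ Set.Ici (0:ℝ), Ξ (t + s) = Ξ t * Ξ s)
    (h0 : Ξ 0 = 1) :
    ∃ β : Matrix (Fin n) (Fin n) ℝ, ∀ t ∈ Set.Ici (0:ℝ),
      Ξ t = NormedSpace.exp (t • β) := by
  -- `exp` depends only on the topology, so any submultiplicative matrix norm will do.
  let := Matrix.linftyOpNormedRing (n := Fin n) (α := ℝ)
  let := Matrix.linftyOpNormedAlgebra (n := Fin n) (R := ℝ) (α := ℝ)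
  have : CompleteSpace (Matrix (Fin n) (Fin n) ℝ) := FiniteDimensional.complete ℝ _
  exact exists_eq_exp_smul_of_semigroup hcont hmul h0
end

section
/- Let (X_t) be a time-homogeneous Markov process on D = ℝ≥0^m × ℝ^n with the affine property: E^x[exp(⟨u, X_t⟩)] = Φ(t,u)·exp(⟨ψ(t,u), x⟩) for all x ∈ D, t ≥ 0, u ∈ iℝ^d, with Φ(t,u) ≠ 0. Then Φ and ψ satisfy the semi-flow equations: Φ(t+s,u) = Φ(t,u)·Φ(s,ψ(t,u)) and ψ(t+s,u) = ψ(s,ψ(t,u)) for all s,t ≥ 0, u ∈ iℝ^d. -/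
open Complex MeasureTheory

/-! Conditioning on the state at time `s`, Chapman–Kolmogorov turns the affine formula at `t + s` into
`Φ t u · 𝔼ˣ[exp ⟨ψ t u, X_s⟩] = Φ t u · Φ s (ψ t u) · exp ⟨ψ s (ψ t u), x⟩`. Comparing with the affine formula at
`t + s` at `x = 0` gives the equation for `Φ`; after cancelling `Φ (t + s) u ≠ 0`, the exponentials
`exp ⟨ψ (t + s) u, x⟩` and `exp ⟨ψ s (ψ t u), x⟩` agree on the orthant `0 ≤ x` inside `D`, which forces the exponents to agree. -/

/-- The set `𝒰` of `u ∈ ℂ^d` with `Re u_I ≤ 0` and `Re u_J = 0`. -/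
def calU (m n : ℕ) : Set (Fin (m + n) → ℂ) :=
  {u | (∀ i : Fin (m + n), (i : ℕ) < m → (u i).re ≤ 0) ∧
       (∀ j : Fin (m + n), m ≤ (j : ℕ) → (u j).re = 0)}

lemma mem_calU_of_re_eq_zero {m n : ℕ} {u : Fin (m + n) → ℂ} (hu : ∀ k, (u k).re = 0) :
    u ∈ calU m n :=
  ⟨fun i _ => (hu i).le, fun j _ => hu j⟩

namespace Complex

/-- `c ↦ exp (a c)` on `[0, ∞)` determines `a`: the values at `c = 1` and `c = √2` pin down `a` modulo
`2πiℤ` and `2πiℤ / √2`, and these lattices meet only in `0`. -/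
theorem eq_of_forall_nonneg_exp_mul_ofReal_eq {a b : ℂ}
    (h : ∀ c : ℝ, 0 ≤ c → exp (a * c) = exp (b * c)) : a = b := by
  obtain ⟨n, hn⟩ := exp_eq_exp_iff_exists_int.mp (by simpa using h 1 zero_le_one)
  obtain ⟨k, hk⟩ := exp_eq_exp_iff_exists_int.mp (h √2 (Real.sqrt_nonneg 2))
  have h2πI : (2 * Real.pi * I : ℂ) ≠ 0 := by simp [Real.pi_ne_zero, I_ne_zero]
  have hsqrt : ((√2 * n : ℝ) : ℂ) = k := by
    refine mul_right_cancel₀ h2πI ?_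
    rw [hn] at hk
    push_cast
    linear_combination hk
  have hn0 : n = 0 := by
    by_contra hn0
    exact (irrational_sqrt_two.mul_intCast hn0).ne_int k (by exact_mod_cast hsqrt)
  simpa [hn0] using hn

theorem eq_of_forall_nonneg_exp_sum_mul_ofReal_eq {ι : Type*} [Fintype ι] {a b : ι → ℂ}
    (h : ∀ x : ι → ℝ, 0 ≤ x → exp (∑ k, a k * x k) = exp (∑ k, b k * x k)) : a = b := by
  classical
  funext k
  refine eq_of_forall_nonneg_exp_mul_ofReal_eq fun c hc => ?_
  simpa [Pi.single_apply, apply_ite, mul_ite] using h (Pi.single k c) (Pi.single_nonneg.mpr hc)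

theorem norm_exp_sum_mul_ofReal {ι : Type*} [Fintype ι] {u : ι → ℂ} (hu : ∀ k, (u k).re = 0)
    (ξ : ι → ℝ) : ‖exp (∑ k, u k * ξ k)‖ = 1 := by
  simp [norm_exp, re_sum, hu]

end Complex

section AffineProcess

variable {ι : Type*} [Fintype ι] {D : Set (ι → ℝ)} {U : Set (ι → ℂ)}
  {p : ℝ → (ι → ℝ) → Measure (ι → ℝ)} {Φ : ℝ → (ι → ℂ) → ℂ} {ψ : ℝ → (ι → ℂ) → (ι → ℂ)}

theorem affine_transform_add_eq
    (hsupp : ∀ t ≥ (0:ℝ), ∀ x ∈ D, p t x Dᶜ = 0)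
    (hMarkov : ∀ t ≥ (0:ℝ), ∀ s ≥ (0:ℝ), ∀ x ∈ D,
      ∀ f : (ι → ℝ) → ℂ, Measurable f → (∀ ξ, ‖f ξ‖ ≤ 1) →
        ∫ ξ, f ξ ∂(p (t + s) x) = ∫ y, (∫ ξ, f ξ ∂(p t y)) ∂(p s x))
    (haffine : ∀ t ≥ (0:ℝ), ∀ u ∈ U, ∀ x ∈ D,
      ∫ ξ, exp (∑ k, u k * (ξ k : ℂ)) ∂(p t x) = Φ t u * exp (∑ k, ψ t u k * (x k : ℂ)))
    (hψmem : ∀ t ≥ (0:ℝ), ∀ u ∈ U, ψ t u ∈ U)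
    {t s : ℝ} (ht : 0 ≤ t) (hs : 0 ≤ s) {u : ι → ℂ} (huU : u ∈ U) (hu : ∀ k, (u k).re = 0)
    {x : ι → ℝ} (hx : x ∈ D) :
    Φ (t + s) u * exp (∑ k, ψ (t + s) u k * (x k : ℂ))
      = Φ t u * Φ s (ψ t u) * exp (∑ k, ψ s (ψ t u) k * (x k : ℂ)) := by
  have hXs_mem : ∀ᵐ y ∂(p s x), y ∈ D := ae_iff.mpr (hsupp s hs x hx)
  have hinner : ∫ y, (∫ ξ, exp (∑ k, u k * (ξ k : ℂ)) ∂(p t y)) ∂(p s x)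
      = ∫ y, Φ t u * exp (∑ k, ψ t u k * (y k : ℂ)) ∂(p s x) :=
    integral_congr_ae (hXs_mem.mono fun y hy => haffine t ht u huU y hy)
  rw [← haffine (t + s) (add_nonneg ht hs) u huU x hx,
    hMarkov t ht s hs x hx _ (by fun_prop) fun ξ => (norm_exp_sum_mul_ofReal hu ξ).le, hinner,
    integral_const_mul, haffine s hs (ψ t u) (hψmem t ht u huU) x hx, mul_assoc]

end AffineProcess

theorem stmt10_general (m n : ℕ)
    (D : Set (Fin (m + n) → ℝ))
    (hD : D = {x | ∀ i : Fin (m + n), (i : ℕ) < m → 0 ≤ x i})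
    -- transition kernels of the time-homogeneous Markov process
    (p : ℝ → (Fin (m + n) → ℝ) → Measure (Fin (m + n) → ℝ))
    (hsupp : ∀ t ≥ (0:ℝ), ∀ x ∈ D, p t x Dᶜ = 0)
    -- the Markov property / Chapman–Kolmogorov equation
    (hMarkov : ∀ t ≥ (0:ℝ), ∀ s ≥ (0:ℝ), ∀ x ∈ D,
      ∀ f : (Fin (m + n) → ℝ) → ℂ, Measurable f → (∀ ξ, ‖f ξ‖ ≤ 1) →
        ∫ ξ, f ξ ∂(p (t + s) x) = ∫ y, (∫ ξ, f ξ ∂(p t y)) ∂(p s x))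
    (Φ : ℝ → (Fin (m + n) → ℂ) → ℂ)
    (ψ : ℝ → (Fin (m + n) → ℂ) → (Fin (m + n) → ℂ))
    -- the affine property of the characteristic function
    (haffine : ∀ t ≥ (0:ℝ), ∀ u ∈ calU m n, ∀ x ∈ D,
      ∫ ξ, Complex.exp (∑ k, u k * (ξ k : ℂ)) ∂(p t x)
        = Φ t u * Complex.exp (∑ k, ψ t u k * (x k : ℂ)))
    (hΦne : ∀ t ≥ (0:ℝ), ∀ u ∈ calU m n, Φ t u ≠ 0)
    (hψmem : ∀ t ≥ (0:ℝ), ∀ u ∈ calU m n, ψ t u ∈ calU m n) :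
    ∀ t ≥ (0:ℝ), ∀ s ≥ (0:ℝ), ∀ u : Fin (m + n) → ℂ, (∀ k, (u k).re = 0) →
      Φ (t + s) u = Φ t u * Φ s (ψ t u) ∧
      ψ (t + s) u = ψ s (ψ t u) := by
  intro t ht s hs u hu
  have huU : u ∈ calU m n := mem_calU_of_re_eq_zero hu
  have hnonneg_mem : ∀ x : Fin (m + n) → ℝ, 0 ≤ x → x ∈ D := fun x hx => hD ▸ fun i _ => hx i
  have key := fun x hx =>
    affine_transform_add_eq hsupp hMarkov haffine hψmem ht hs huU hu (x := x) hx
  have hΦ : Φ (t + s) u = Φ t u * Φ s (ψ t u) := by simpa using key 0 (hnonneg_mem 0 le_rfl)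
  refine ⟨hΦ, eq_of_forall_nonneg_exp_sum_mul_ofReal_eq fun x hx => ?_⟩
  have hΦne' : Φ t u * Φ s (ψ t u) ≠ 0 := hΦ ▸ hΦne (t + s) (add_nonneg ht hs) u huU
  exact mul_left_cancel₀ hΦne' (hΦ ▸ key x (hnonneg_mem x hx))

theorem stmt10 (m n : ℕ)
    (D : Set (Fin (m + n) → ℝ))
    (hD : D = {x | ∀ i : Fin (m + n), (i : ℕ) < m → 0 ≤ x i})
    -- transition kernels of the time-homogeneous Markov process
    (p : ℝ → (Fin (m + n) → ℝ) → Measure (Fin (m + n) → ℝ))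
    (hprob : ∀ t ≥ (0:ℝ), ∀ x ∈ D, IsProbabilityMeasure (p t x))
    (hsupp : ∀ t ≥ (0:ℝ), ∀ x ∈ D, p t x Dᶜ = 0)
    -- the Markov property / Chapman–Kolmogorov equation
    (hMarkov : ∀ t ≥ (0:ℝ), ∀ s ≥ (0:ℝ), ∀ x ∈ D,
      ∀ f : (Fin (m + n) → ℝ) → ℂ, Measurable f → (∀ ξ, ‖f ξ‖ ≤ 1) →
        ∫ ξ, f ξ ∂(p (t + s) x) = ∫ y, (∫ ξ, f ξ ∂(p t y)) ∂(p s x))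
    (Φ : ℝ → (Fin (m + n) → ℂ) → ℂ)
    (ψ : ℝ → (Fin (m + n) → ℂ) → (Fin (m + n) → ℂ))
    -- the affine property of the characteristic function
    (haffine : ∀ t ≥ (0:ℝ), ∀ u ∈ calU m n, ∀ x ∈ D,
      ∫ ξ, Complex.exp (∑ k, u k * (ξ k : ℂ)) ∂(p t x)
        = Φ t u * Complex.exp (∑ k, ψ t u k * (x k : ℂ)))
    (hΦne : ∀ t ≥ (0:ℝ), ∀ u ∈ calU m n, Φ t u ≠ 0)
    (hψmem : ∀ t ≥ (0:ℝ), ∀ u ∈ calU m n, ψ t u ∈ calU m n) :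
    ∀ t ≥ (0:ℝ), ∀ s ≥ (0:ℝ), ∀ u : Fin (m + n) → ℂ, (∀ k, (u k).re = 0) →
      Φ (t + s) u = Φ t u * Φ s (ψ t u) ∧
      ψ (t + s) u = ψ s (ψ t u) :=
  stmt10_general m n D hD p hsupp hMarkov Φ ψ haffine hΦne hψmem
end

section
/- Let Φ : ℝ≥0 × iℝ^d → ℂ and ψ : ℝ≥0 × iℝ^d → ℂ^d be such that for a family of probability measures (μ_{t,x})_{t≥0, x∈D} on D = ℝ≥0^m × ℝ^n one has ∫ exp(⟨u,ξ⟩) dμ_{t,x}(ξ) = Φ(t,u)·exp(⟨ψ(t,u), x⟩) for all u ∈ iℝ^d. Then |Φ(t,u)| ≤ 1 and ψ(t,u) ∈ 𝒰 = {w ∈ ℂ^d : Re w_I ≤ 0, Re w_J = 0} for all t ≥ 0, u ∈ iℝ^d with Φ(t,u) ≠ 0. -/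
/-!
The characteristic function of a probability measure has modulus at most `1`, so
`‖Φ t u‖ * exp ⟨Re ψ(t,u), x⟩ ≤ 1` on all of `D`. Moving `x` along a coordinate axis inside `D`
(in the positive direction for every coordinate, in both directions for the coordinates in `J`)
forces the corresponding component of `Re ψ(t,u)` to be `≤ 0`, respectively `= 0`, as soon as
`Φ t u ≠ 0`; taking `x = 0` gives `‖Φ t u‖ ≤ 1`.
-/

open Complex MeasureTheory

lemma norm_integral_exp_le_one_of_re_eq_zero {α : Type*} [MeasurableSpace α] (μ : Measure α)
    [IsProbabilityMeasure μ] {f : α → ℂ} (hf : ∀ a, (f a).re = 0) :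
    ‖∫ a, exp (f a) ∂μ‖ ≤ 1 := by
  simpa using norm_integral_le_of_norm_le_const (μ := μ) (C := 1)
    (Filter.Eventually.of_forall fun a => by rw [norm_exp, hf, Real.exp_zero])

lemma re_sum_mul_ofReal {ι : Type*} [Fintype ι] (u : ι → ℂ) (x : ι → ℝ) :
    (∑ k, u k * (x k : ℂ)).re = ∑ k, (u k).re * x k := by
  simp [re_sum]

/-- If `a > 0`, the witness `s = 1 / (A * a)` gives `A * exp (a * s) ≥ A * (1 + a * s) = A + 1`. -/
lemma nonpos_of_forall_nonneg_mul_exp_mul_le_one {A a : ℝ} (hA : 0 < A)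
    (h : ∀ s ≥ 0, A * Real.exp (a * s) ≤ 1) : a ≤ 0 := by
  by_contra! ha
  have hs : 0 ≤ 1 / (A * a) := by positivity
  have hlin : A * (1 + a * (1 / (A * a))) ≤ A * Real.exp (a * (1 / (A * a))) :=
    mul_le_mul_of_nonneg_left (by linarith [Real.add_one_le_exp (a * (1 / (A * a)))]) hA.le
  have : A * (1 + a * (1 / (A * a))) = A + 1 := by field_simp
  linarith [h _ hs]

theorem stmt11_general (m n : ℕ)
    (D : Set (Fin (m + n) → ℝ))
    (hD : D = {x | ∀ i : Fin (m + n), (i : ℕ) < m → 0 ≤ x i})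
    (μ : ℝ → (Fin (m + n) → ℝ) → Measure (Fin (m + n) → ℝ))
    (hprob : ∀ t ≥ (0:ℝ), ∀ x ∈ D, IsProbabilityMeasure (μ t x))
    (Φ : ℝ → (Fin (m + n) → ℂ) → ℂ)
    (ψ : ℝ → (Fin (m + n) → ℂ) → (Fin (m + n) → ℂ))
    (haffine : ∀ t ≥ (0:ℝ), ∀ u : Fin (m + n) → ℂ, (∀ k, (u k).re = 0) →
      ∀ x ∈ D, ∫ ξ, Complex.exp (∑ k, u k * (ξ k : ℂ)) ∂(μ t x)
        = Φ t u * Complex.exp (∑ k, ψ t u k * (x k : ℂ))) :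
    ∀ t ≥ (0:ℝ), ∀ u : Fin (m + n) → ℂ, (∀ k, (u k).re = 0) → Φ t u ≠ 0 →
      ‖Φ t u‖ ≤ 1 ∧
      (∀ i : Fin (m + n), (i : ℕ) < m → (ψ t u i).re ≤ 0) ∧
      (∀ j : Fin (m + n), m ≤ (j : ℕ) → (ψ t u j).re = 0) := by
  intro t ht u hu hΦ
  have hbound : ∀ x ∈ D, ‖Φ t u‖ * Real.exp (∑ k, (ψ t u k).re * x k) ≤ 1 := by
    intro x hx
    have := hprob t ht x hx
    have h := norm_integral_exp_le_one_of_re_eq_zero (μ t x)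
      (f := fun ξ => ∑ k, u k * (ξ k : ℂ)) fun ξ => by simp [hu]
    rwa [haffine t ht u hu x hx, norm_mul, norm_exp, re_sum_mul_ofReal] at h
  have hsingle : ∀ k s, Pi.single k s ∈ D → ‖Φ t u‖ * Real.exp ((ψ t u k).re * s) ≤ 1 := by
    intro k s hks
    simpa [Pi.single_apply] using hbound _ hks
  have hsingle_mem : ∀ (k : Fin (m + n)) (s : ℝ), (0 ≤ s ∨ m ≤ (k : ℕ)) → Pi.single k s ∈ D := by
    rw [hD]
    intro k s hks i hi
    rcases eq_or_ne i k with rfl | hik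
    · simpa [hi.not_ge] using hks
    · simp [hik]
  have hpos : 0 < ‖Φ t u‖ := norm_pos_iff.2 hΦ
  have hnonpos : ∀ k, (ψ t u k).re ≤ 0 := fun k =>
    nonpos_of_forall_nonneg_mul_exp_mul_le_one hpos fun s hs =>
      hsingle k s (hsingle_mem k s (.inl hs))
  refine ⟨by simpa using hbound 0 (hD ▸ fun _ _ => le_rfl), fun i _ => hnonpos i,
    fun j hj => le_antisymm (hnonpos j) (neg_nonpos.1 ?_)⟩
  exact nonpos_of_forall_nonneg_mul_exp_mul_le_one hpos fun s _ => by
    simpa using hsingle j (-s) (hsingle_mem j _ (.inr hj))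

theorem stmt11 (m n : ℕ)
    (D : Set (Fin (m + n) → ℝ))
    (hD : D = {x | ∀ i : Fin (m + n), (i : ℕ) < m → 0 ≤ x i})
    (μ : ℝ → (Fin (m + n) → ℝ) → Measure (Fin (m + n) → ℝ))
    (hprob : ∀ t ≥ (0:ℝ), ∀ x ∈ D, IsProbabilityMeasure (μ t x))
    (hsupp : ∀ t ≥ (0:ℝ), ∀ x ∈ D, μ t x Dᶜ = 0)
    (Φ : ℝ → (Fin (m + n) → ℂ) → ℂ)
    (ψ : ℝ → (Fin (m + n) → ℂ) → (Fin (m + n) → ℂ))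
    (haffine : ∀ t ≥ (0:ℝ), ∀ u : Fin (m + n) → ℂ, (∀ k, (u k).re = 0) →
      ∀ x ∈ D, ∫ ξ, Complex.exp (∑ k, u k * (ξ k : ℂ)) ∂(μ t x)
        = Φ t u * Complex.exp (∑ k, ψ t u k * (x k : ℂ))) :
    ∀ t ≥ (0:ℝ), ∀ u : Fin (m + n) → ℂ, (∀ k, (u k).re = 0) → Φ t u ≠ 0 →
      ‖Φ t u‖ ≤ 1 ∧
      (∀ i : Fin (m + n), (i : ℕ) < m → (ψ t u i).re ≤ 0) ∧
      (∀ j : Fin (m + n), m ≤ (j : ℕ) → (ψ t u j).re = 0) :=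
  stmt11_general m n D hD μ hprob Φ ψ haffine
end

section
/- Let φ : ℝ → ℂ be the characteristic function of a real random variable X, i.e. φ(y) = E[exp(iyX)]. If 1/φ is also a characteristic function of some real random variable, then X is almost surely constant, i.e. φ(y) = exp(iym) for some m ∈ ℝ. -/
/-!
The product `φ · (1/φ) = 1` is the characteristic function of the convolution `ν ∗ μ`, so by
uniqueness of characteristic functions `ν ∗ μ = δ₀`. Thus `Y + X = 0` almost surely for
independent `Y ~ ν`, `X ~ μ`; fixing a typical value `b` of `Y` forces `X = -b` almost surely.
-/

open Complex MeasureTheory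

namespace MeasureTheory.Measure

theorem exists_eq_dirac_of_conv_eq_dirac {G : Type*} [AddGroup G]
    [MeasurableSpace G] [MeasurableSingletonClass G] [MeasurableAdd₂ G]
    {μ ν : Measure G} [IsProbabilityMeasure μ] [SFinite ν] [NeZero ν] {z : G}
    (h : ν ∗ μ = dirac z) : ∃ c, μ = dirac c := by
  have hsum : ∀ᵐ p ∂ν.prod μ, p.1 + p.2 = z := by
    have : ∀ᵐ x ∂ν ∗ μ, x = z := by simp [h]
    exact ae_of_ae_map (by fun_prop) this
  obtain ⟨b, hb⟩ := (ae_ae_of_ae_prod hsum).exists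
  have hμ : (id : G → G) =ᵐ[μ] fun _ => -b + z := hb.mono fun a ha => by simp [← ha]
  exact ⟨-b + z, by simpa using (ProbabilityTheory.hasLaw_dirac_of_ae_eq hμ).map_eq⟩

variable {E : Type*} [NormedAddCommGroup E] [InnerProductSpace ℝ E] [CompleteSpace E]
  [SecondCountableTopology E] [MeasurableSpace E] [BorelSpace E]

theorem conv_eq_dirac_zero_of_charFun_mul_eq_one {μ ν : Measure E}
    [IsFiniteMeasure μ] [IsFiniteMeasure ν] (h : ∀ t, charFun μ t * charFun ν t = 1) :
    μ ∗ ν = dirac 0 :=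
  ext_of_charFun <| funext fun t => by simp [charFun_conv, h]

theorem exists_eq_dirac_of_charFun_mul_eq_one {μ ν : Measure E}
    [IsProbabilityMeasure μ] [IsProbabilityMeasure ν] (h : ∀ t, charFun μ t * charFun ν t = 1) :
    ∃ c, μ = dirac c :=
  exists_eq_dirac_of_conv_eq_dirac <|
    conv_eq_dirac_zero_of_charFun_mul_eq_one fun t => by rw [mul_comm, h]

end MeasureTheory.Measure

theorem stmt12 (μ ν : Measure ℝ) [IsProbabilityMeasure μ] [IsProbabilityMeasure ν]
    (φ : ℝ → ℂ) (hφ : ∀ y : ℝ, φ y = ∫ x, Complex.exp (Complex.I * y * x) ∂μ)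
    -- `1/φ` is the characteristic function of `ν`
    (hrecip : ∀ y : ℝ, φ y * (∫ x, Complex.exp (Complex.I * y * x) ∂ν) = 1) :
    ∃ c : ℝ, ∀ y : ℝ, φ y = Complex.exp (Complex.I * y * c) := by
  have hcharFun (ρ : Measure ℝ) (y : ℝ) :
      ∫ x, Complex.exp (Complex.I * y * x) ∂ρ = charFun ρ y := by
    simp only [charFun_apply_real, mul_comm, mul_left_comm]
  simp only [hcharFun] at hφ hrecip
  obtain ⟨c, rfl⟩ := Measure.exists_eq_dirac_of_charFun_mul_eq_one fun y => hφ y ▸ hrecip y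
  refine ⟨c, fun y => ?_⟩
  rw [hφ, charFun_dirac, RCLike.inner_apply, conj_trivial]
  push_cast
  ring_nf
end

section
/- Let x : ℝ≥0 → ℝ^d be a càdlàg function and K a real d×d matrix. Define z(t) = x(t) − Kᵀ·∫₀ᵗ x(s) ds. Then x can be recovered from z by x(t) = z(t) + Kᵀ·∫₀ᵗ exp((t−s)Kᵀ)·z(s) ds. -/
/-!
Write `A = Kᵀ` and `y t = ∫₀ᵗ x`, so that `z = x - A y`. Since `x` is right-continuous, `y` has
right derivative `x`, and `s ↦ exp((t - s) A) y(s)` has right derivative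
`exp((t - s) A) (x(s) - A y(s)) = exp((t - s) A) z(s)`. The fundamental theorem of calculus for
right derivatives then gives `∫₀ᵗ exp((t - s) A) z(s) ds = y(t)`, i.e. `x(t) = z(t) + A y(t)`.
Left limits make a càdlàg path locally bounded, hence locally integrable, so all integrals are
genuine.
-/

open Matrix intervalIntegral Set Filter Topology MeasureTheory

section Cadlag

variable {E : Type*}

structure IsCadlag [TopologicalSpace E] (x : ℝ → E) : Prop where
  continuousWithinAt_Ici : ∀ t, ContinuousWithinAt x (Ici t) t
  exists_tendsto_nhdsLT : ∀ t, ∃ l, Tendsto x (𝓝[<] t) (𝓝 l)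

theorem tendsto_ceil_mul_div_nhdsGE (t : ℝ) :
    Tendsto (fun n : ℕ => (⌈t * (n + 1)⌉ : ℝ) / (n + 1)) atTop (𝓝[≥] t) := by
  have hpos (n : ℕ) : (0 : ℝ) < n + 1 := n.cast_add_one_pos
  have lower (n : ℕ) : t ≤ (⌈t * (n + 1)⌉ : ℝ) / (n + 1) :=
    (le_div_iff₀ (hpos n)).2 (Int.le_ceil _)
  have upper (n : ℕ) : (⌈t * (n + 1)⌉ : ℝ) / (n + 1) ≤ t + 1 / (n + 1) := by
    rw [div_le_iff₀ (hpos n), add_mul, one_div_mul_cancel (hpos n).ne']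
    exact (Int.ceil_lt_add_one _).le
  refine tendsto_nhdsWithin_iff.2 ⟨?_, .of_forall lower⟩
  have : Tendsto (fun n : ℕ => t + 1 / ((n : ℝ) + 1)) atTop (𝓝 t) := by
    simpa using tendsto_const_nhds.add (tendsto_one_div_add_atTop_nhds_zero_nat (𝕜 := ℝ))
  exact tendsto_of_tendsto_of_tendsto_of_le_of_le tendsto_const_nhds this lower upper

theorem stronglyMeasurable_of_continuousWithinAt_Ici [TopologicalSpace E]
    [TopologicalSpace.PseudoMetrizableSpace E] {x : ℝ → E}
    (hx : ∀ t, ContinuousWithinAt x (Ici t) t) : StronglyMeasurable x := by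
  refine stronglyMeasurable_of_tendsto atTop
    (f := fun (n : ℕ) (t : ℝ) => x (⌈t * ((n : ℝ) + 1)⌉ / ((n : ℝ) + 1))) (fun n => ?_)
    (tendsto_pi_nhds.2 fun t => (hx t).tendsto.comp (tendsto_ceil_mul_div_nhdsGE t))
  exact (StronglyMeasurable.of_discrete (f := fun k : ℤ => x (k / ((n : ℝ) + 1))))
    |>.comp_measurable
    (Int.measurable_ceil.comp (measurable_id.mul_const _))

namespace IsCadlag

variable {x : ℝ → E}

theorem stronglyMeasurable [TopologicalSpace E] [TopologicalSpace.PseudoMetrizableSpace E]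
    (hx : IsCadlag x) : StronglyMeasurable x :=
  stronglyMeasurable_of_continuousWithinAt_Ici hx.continuousWithinAt_Ici

theorem isBoundedUnder_norm [SeminormedAddGroup E] (hx : IsCadlag x) (t : ℝ) :
    (𝓝 t).IsBoundedUnder (· ≤ ·) (‖x ·‖) := by
  obtain ⟨l, hl⟩ := hx.exists_tendsto_nhdsLT t
  rw [← nhdsLT_sup_nhdsGE, IsBoundedUnder, map_sup]
  exact isBounded_sup hl.norm.isBoundedUnder_le
    (hx.continuousWithinAt_Ici t).tendsto.norm.isBoundedUnder_le

theorem locallyIntegrable [NormedAddCommGroup E] (hx : IsCadlag x) : LocallyIntegrable x :=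
  fun t => (Measure.finiteAt_nhds volume t).integrableAtFilter
    hx.stronglyMeasurable.stronglyMeasurableAtFilter (hx.isBoundedUnder_norm t)

theorem intervalIntegrable [NormedAddCommGroup E] (hx : IsCadlag x) (a b : ℝ) :
    IntervalIntegrable x volume a b :=
  (hx.locallyIntegrable.integrableOn_isCompact isCompact_uIcc).intervalIntegrable

theorem hasDerivWithinAt_integral_Ioi [NormedAddCommGroup E] [NormedSpace ℝ E] [CompleteSpace E]
    (hx : IsCadlag x) (a t : ℝ) :
    HasDerivWithinAt (fun u => ∫ s in a..u, x s) (x t) (Ioi t) t :=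
  (integral_hasDerivWithinAt_right (s := Ici t) (t := Ioi t) (hx.intervalIntegrable a t)
    hx.stronglyMeasurable.stronglyMeasurableAtFilter
    ((hx.continuousWithinAt_Ici t).mono Ioi_subset_Ici_self)).mono Ioi_subset_Ici_self

end IsCadlag

theorem Continuous.isCadlag_comp₂ {F G : Type*} [TopologicalSpace E] [TopologicalSpace F]
    [TopologicalSpace G] {g : F → E → G} (hg : Continuous (Function.uncurry g)) {f : ℝ → F}
    (hf : Continuous f) {x : ℝ → E} (hx : IsCadlag x) : IsCadlag fun s => g (f s) (x s) where
  continuousWithinAt_Ici t :=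
    hg.continuousAt.comp_continuousWithinAt
      (hf.continuousWithinAt.prodMk (hx.continuousWithinAt_Ici t))
  exists_tendsto_nhdsLT t := by
    obtain ⟨l, hl⟩ := hx.exists_tendsto_nhdsLT t
    exact ⟨g (f t) l, (hg.tendsto (f t, l)).comp (hf.continuousWithinAt.tendsto.prodMk_nhds hl)⟩

end Cadlag

section MatrixCalculus

-- Only the topology of matrices enters the statements below; any norm inducing it will do.
attribute [local instance] Matrix.linftyOpNormedAddCommGroup Matrix.linftyOpNormedSpace
  Matrix.linftyOpNormedRing Matrix.linftyOpNormedAlgebra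

variable {m n : Type*} [Fintype n]

theorem HasDerivWithinAt.matrix_mulVec [Fintype m] {M : ℝ → Matrix m n ℝ} {M' : Matrix m n ℝ}
    {v : ℝ → n → ℝ} {v' : n → ℝ} {s : Set ℝ} {t : ℝ} (hM : HasDerivWithinAt M M' s t)
    (hv : HasDerivWithinAt v v' s t) :
    HasDerivWithinAt (fun r => M r *ᵥ v r) (M t *ᵥ v' + M' *ᵥ v t) s t :=
  (mulVecBilin ℝ ℝ : Matrix m n ℝ →ₗ[ℝ] (n → ℝ) →ₗ[ℝ] m → ℝ).toContinuousBilinearMap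
    |>.hasDerivWithinAt_of_bilinear hM hv

theorem hasDerivAt_exp_sub_smul [DecidableEq n] (A : Matrix n n ℝ) (b s : ℝ) :
    HasDerivAt (fun r : ℝ => NormedSpace.exp ((b - r) • A))
      (-(A * NormedSpace.exp ((b - s) • A))) s := by
  have := (hasDerivAt_exp_smul_const' (𝕂 := ℝ) A (b - s)).scomp s ((hasDerivAt_id s).const_sub b)
  simp only [Function.comp_def, neg_one_smul] at this
  exact this

theorem continuous_exp_sub_smul [DecidableEq n] (A : Matrix n n ℝ) (b : ℝ) :
    Continuous fun r : ℝ => NormedSpace.exp ((b - r) • A) :=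
  continuous_iff_continuousAt.2 fun s => (hasDerivAt_exp_sub_smul A b s).continuousAt

theorem integral_exp_sub_smul_mulVec [DecidableEq n] {A : Matrix n n ℝ} {y y' : ℝ → n → ℝ}
    {a b : ℝ} (hab : a ≤ b) (hy : ContinuousOn y (Icc a b))
    (hy' : ∀ s ∈ Ioo a b, HasDerivWithinAt y (y' s) (Ioi s) s)
    (hint : IntervalIntegrable (fun s => NormedSpace.exp ((b - s) • A) *ᵥ (y' s - A *ᵥ y s))
      volume a b) :
    ∫ s in a..b, NormedSpace.exp ((b - s) • A) *ᵥ (y' s - A *ᵥ y s) =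
      y b - NormedSpace.exp ((b - a) • A) *ᵥ y a := by
  have hderiv (s : ℝ) (hs : s ∈ Ioo a b) : HasDerivWithinAt
      (fun r => NormedSpace.exp ((b - r) • A) *ᵥ y r)
      (NormedSpace.exp ((b - s) • A) *ᵥ (y' s - A *ᵥ y s)) (Ioi s) s := by
    have hcomm : Commute A (NormedSpace.exp ((b - s) • A)) :=
      ((Commute.refl A).smul_right _).exp_right
    convert (hasDerivAt_exp_sub_smul A b s).hasDerivWithinAt.matrix_mulVec (hy' s hs) using 1
    rw [mulVec_sub, mulVec_mulVec, neg_mulVec, hcomm.eq, sub_eq_add_neg]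
  rw [integral_eq_sub_of_hasDeriv_right_of_le
    (f := fun r => NormedSpace.exp ((b - r) • A) *ᵥ y r) hab
    ((continuous_fst.matrix_mulVec continuous_snd).comp_continuousOn
      ((continuous_exp_sub_smul A b).continuousOn.prodMk hy)) hderiv hint,
    sub_self, zero_smul, NormedSpace.exp_zero, one_mulVec]

end MatrixCalculus

theorem stmt15 (d : ℕ) (x : ℝ → (Fin d → ℝ)) (K : Matrix (Fin d) (Fin d) ℝ)
    -- x is càdlàg : right-continuous with left limits
    (hrc : ∀ t : ℝ, ContinuousWithinAt x (Set.Ici t) t)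
    (hll : ∀ t : ℝ, ∃ l : Fin d → ℝ, Filter.Tendsto x (nhdsWithin t (Set.Iio t)) (nhds l))
    (z : ℝ → (Fin d → ℝ))
    (hz : ∀ t : ℝ, z t = x t - Kᵀ *ᵥ (∫ s in (0:ℝ)..t, x s)) :
    ∀ t ≥ (0:ℝ),
      x t = z t + Kᵀ *ᵥ (∫ s in (0:ℝ)..t, (NormedSpace.exp ((t - s) • Kᵀ)) *ᵥ z s) := by
  intro t ht
  have hx : IsCadlag x := ⟨hrc, hll⟩
  set y : ℝ → Fin d → ℝ := fun r => ∫ s in (0:ℝ)..r, x s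
  have hy : Continuous y := continuous_primitive hx.intervalIntegrable 0
  obtain rfl : z = fun s => x s - Kᵀ *ᵥ y s := funext hz
  have hint : IntervalIntegrable (fun s => NormedSpace.exp ((t - s) • Kᵀ) *ᵥ (x s - Kᵀ *ᵥ y s))
      volume 0 t :=
    (Continuous.isCadlag_comp₂ (g := fun p (v : Fin d → ℝ) => p.1 *ᵥ (v - Kᵀ *ᵥ p.2))
      (by fun_prop) ((continuous_exp_sub_smul Kᵀ t).prodMk hy) hx).intervalIntegrable 0 t
  rw [integral_exp_sub_smul_mulVec ht hy.continuousOn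
    (fun s _ => hx.hasDerivWithinAt_integral_Ioi 0 s) hint]
  simp [y]
end

section
/- Let Υ : [0,T) × U → ℂ^k be a local semi-flow (Υ(t+s,u) = Υ(t,Υ(s,u)), Υ(0,u) = u) on an open set U ⊆ ℂ^k, jointly continuous, and continuously differentiable in u with Jacobian ∂Υ/∂u(0,u) = id. Suppose for fixed u and all small s > 0 the averaged Jacobian M(s,u) = (1/s)∫₀ˢ (∂Υ/∂u)(r,u) dr is invertible. Then the limit lim_{t↓0} (Υ(t,u) − u)/t exists and equals (Υ(s,u) − u)/s · M(s,u)^{−1} for all sufficiently small s > 0; in particular t ↦ Υ(t,u) is right-differentiable at t = 0. -/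
/-!
Write `φ t = Υ t u - u`. For `0 < s` and small `t > 0`, the semi-flow law and a change of
variables give `∫₀ˢ (Υ r (Υ t u) - Υ r u) dr = G t := ∫₀ᵗ (Υ (r + s) u - Υ r u) dr`. A first-order
Taylor expansion of `Υ r` at `u`, uniform in `r ∈ [0, s]`, turns the left side into
`s • M s u (φ t) + o(‖φ t‖)`, while `G t / t → Υ s u - u` by the fundamental theorem of calculus.
Since `M s u` has a left inverse, this first forces `φ t = O(t)`, so the error is `o(t)` and
`φ t / t → (M s u)⁻¹ ((Υ s u - u) / s)`. The limit does not depend on `s`.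
-/

open Complex intervalIntegral Set Filter Topology Asymptotics MeasureTheory

section
variable {E : Type*} [NormedAddCommGroup E] [NormedSpace ℝ E]

theorem integral_comp_add_right_sub {f : ℝ → E} {s t : ℝ} (hs : 0 ≤ s) (ht : 0 ≤ t)
    (hf : IntervalIntegrable f volume 0 (s + t)) :
    ∫ r in (0:ℝ)..s, (f (r + t) - f r) =
      (∫ r in (0:ℝ)..(s + t), f r) - (∫ r in (0:ℝ)..t, f r) - ∫ r in (0:ℝ)..s, f r := by
  have hf_le : ∀ c, 0 ≤ c → c ≤ s + t → IntervalIntegrable f volume 0 c := fun c hc hcs =>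
    hf.mono_set (uIcc_subset_uIcc_left (by rw [uIcc_of_le (by linarith)]; exact ⟨hc, hcs⟩))
  have hf_shift : IntervalIntegrable (fun r => f (r + t)) volume 0 s := by
    refine (hf.comp_add_right t).mono_set ?_
    rw [zero_sub, add_sub_cancel_right, uIcc_of_le hs, uIcc_of_le (by linarith)]
    exact Icc_subset_Icc_left (by linarith)
  rw [integral_sub hf_shift (hf_le s hs (by linarith)), integral_comp_add_right, zero_add,
    ← integral_interval_sub_left hf (hf_le t ht (by linarith)), add_comm]

theorem integral_comp_add_right_sub_comm {f : ℝ → E} {s t : ℝ} (hs : 0 ≤ s) (ht : 0 ≤ t)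
    (hf : IntervalIntegrable f volume 0 (s + t)) :
    ∫ r in (0:ℝ)..s, (f (r + t) - f r) = ∫ r in (0:ℝ)..t, (f (r + s) - f r) := by
  rw [integral_comp_add_right_sub hs ht hf,
    integral_comp_add_right_sub ht hs (add_comm s t ▸ hf), add_comm t s, sub_right_comm]

theorem tendsto_inv_smul_integral_nhdsGT [CompleteSpace E] {f : ℝ → E} {c : ℝ} (hc : 0 < c)
    (hf : ContinuousOn f (Ico 0 c)) :
    Tendsto (fun t : ℝ => t⁻¹ • ∫ r in (0:ℝ)..t, f r) (𝓝[>] 0) (𝓝 (f 0)) := by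
  have hderiv : HasDerivWithinAt (fun t => ∫ r in (0:ℝ)..t, f r) (f 0) (Ici 0) 0 :=
    integral_hasDerivWithinAt_right (t := Ioi 0) (by simp)
      ⟨Ioo 0 c, Ioo_mem_nhdsGT hc,
        (hf.mono Ioo_subset_Ico_self).aestronglyMeasurable measurableSet_Ioo⟩
      ((hf.continuousWithinAt ⟨le_rfl, hc⟩).mono_of_mem_nhdsWithin (Ico_mem_nhdsGT hc))
  simpa only [Ici_sdiff_left, slope_fun_def, vsub_eq_sub, sub_zero, integral_same] using
    hasDerivWithinAt_iff_tendsto_slope.1 hderiv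

end

theorem tendsto_inv_smul_of_isLittleO {E F : Type*} [NormedAddCommGroup E] [NormedSpace ℝ E]
    [NormedAddCommGroup F] [NormedSpace ℝ F] {l : Filter ℝ} (hl : ∀ᶠ t in l, t ≠ 0)
    {φ : ℝ → E} {G : ℝ → F} {A : E →L[ℝ] F} {N : F →L[ℝ] E} (hNA : ∀ x, N (A x) = x) {g : F}
    (hG : Tendsto (fun t => t⁻¹ • G t) l (𝓝 g)) (hR : (fun t => G t - A (φ t)) =o[l] φ) :
    Tendsto (fun t => t⁻¹ • φ t) l (𝓝 (N g)) := by
  have hG_id : G =O[l] fun t => t := by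
    refine ((isBigO_refl (fun t : ℝ => t) l).smul (hG.isBigO_one ℝ)).congr' ?_ (by simp)
    filter_upwards [hl] with t ht
    rw [smul_inv_smul₀ ht]
  have hφ_G : φ =O[l] G := by
    have hNR : (fun t => N (G t - A (φ t))) =o[l] φ := (N.isBigO_comp _ l).trans_isLittleO hR
    refine hNR.right_isBigO_add.trans ((N.isBigO_comp G l).congr_left fun t => ?_)
    rw [map_sub, hNA, sub_add_cancel]
  have hR_id := hR.trans_isBigO (hφ_G.trans hG_id)
  have hA : Tendsto (fun t => A (t⁻¹ • φ t)) l (𝓝 g) := by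
    refine (sub_zero g ▸ hG.sub hR_id.tendsto_inv_smul_nhds_zero).congr fun t => ?_
    rw [smul_sub, sub_sub_cancel, map_smul]
  exact ((N.continuous.tendsto g).comp hA).congr fun t => hNA _

theorem eventually_forall_norm_sub_sub_fderiv_le {𝕜 X E F : Type*} [RCLike 𝕜]
    [TopologicalSpace X] [NormedAddCommGroup E] [NormedSpace 𝕜 E] [NormedAddCommGroup F]
    [NormedSpace 𝕜 F] {f : X → E → F} {f' : X → E → E →L[𝕜] F} {K : Set X} {U : Set E} {u : E}
    (hK : IsCompact K) (hU : U ∈ 𝓝 u) (hf : ∀ r ∈ K, ∀ x ∈ U, HasFDerivAt (f r) (f' r x) x)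
    (hf' : ContinuousOn (fun p : X × E => f' p.1 p.2) (K ×ˢ U)) {ε : ℝ} (hε : 0 < ε) :
    ∀ᶠ w in 𝓝 u, ∀ r ∈ K, ‖f r w - f r u - f' r u (w - u)‖ ≤ ε * ‖w - u‖ := by
  let : NormedSpace ℝ E := .restrictScalars ℝ 𝕜 E
  have hf'_swap : ContinuousOn (fun x r => f' r x).uncurry (U ×ˢ K) :=
    hf'.comp continuous_swap.continuousOn fun p hp => ⟨hp.2, hp.1⟩
  obtain ⟨v, hv, hf'_near⟩ := hK.mem_uniformity_of_prod hf'_swap (mem_of_mem_nhds hU)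
    (Metric.dist_mem_uniformity hε)
  rw [nhdsWithin_eq_nhds.2 hU] at hv
  obtain ⟨δ, hδ, hball⟩ := Metric.mem_nhds_iff.1 (inter_mem hv hU)
  filter_upwards [Metric.ball_mem_nhds u hδ] with w hw r hr
  exact (convex_ball u δ).norm_image_sub_le_of_norm_hasFDerivWithin_le'
    (fun x hx => (hf r hr x (hball hx).2).hasFDerivWithinAt)
    (fun x hx => by rw [← dist_eq_norm]; exact (hf'_near x (hball hx).1 r hr).le)
    (Metric.mem_ball_self hδ) hw

theorem isLittleO_integral_sub_sub_integral_fderiv {𝕜 E F : Type*} [RCLike 𝕜]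
    [NormedAddCommGroup E] [NormedSpace 𝕜 E] [NormedAddCommGroup F] [NormedSpace 𝕜 F]
    [NormedSpace ℝ F] [IsScalarTower ℝ 𝕜 F] [CompleteSpace F]
    {f : ℝ → E → F} {f' : ℝ → E → E →L[𝕜] F} {a b : ℝ} {U : Set E} {u : E} (hU : U ∈ 𝓝 u)
    (hf : ∀ r ∈ uIcc a b, ∀ x ∈ U, HasFDerivAt (f r) (f' r x) x)
    (hf' : ContinuousOn (fun p : ℝ × E => f' p.1 p.2) (uIcc a b ×ˢ U))
    (hfi : ∀ w ∈ U, IntervalIntegrable (fun r => f r w) volume a b) :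
    (fun w => (∫ r in a..b, (f r w - f r u)) - (∫ r in a..b, f' r u) (w - u)) =o[𝓝 u]
      fun w => w - u := by
  have hu : u ∈ U := mem_of_mem_nhds hU
  have hf'u : ContinuousOn (fun r => f' r u) (uIcc a b) := hf'.uncurry_right (f := f') u hu
  refine isLittleO_iff.2 fun ε hε => ?_
  have hε' : 0 < ε / (|b - a| + 1) := by positivity
  filter_upwards [eventually_forall_norm_sub_sub_fderiv_le isCompact_uIcc hU hf hf' hε', hU]
    with w hw hwU
  rw [ContinuousLinearMap.intervalIntegral_apply hf'u.intervalIntegrable,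
    ← integral_sub ((hfi w hwU).sub (hfi u hu))
      (hf'u.clm_apply continuousOn_const).intervalIntegrable]
  calc ‖∫ r in a..b, (f r w - f r u - f' r u (w - u))‖
      ≤ ε / (|b - a| + 1) * ‖w - u‖ * |b - a| :=
        norm_integral_le_of_norm_le_const fun r hr => hw r (uIoc_subset_uIcc hr)
    _ ≤ ε * ‖w - u‖ := by
        rw [div_mul_eq_mul_div, div_mul_eq_mul_div, div_le_iff₀ (by positivity)]
        nlinarith [norm_nonneg (w - u), mul_nonneg hε.le (norm_nonneg (w - u))]

theorem isLittleO_semiflow_integral_sub_integral_fderiv {𝕜 E : Type*} [RCLike 𝕜]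
    [NormedAddCommGroup E] [NormedSpace 𝕜 E] [NormedSpace ℝ E] [IsScalarTower ℝ 𝕜 E]
    [CompleteSpace E] {Υ : ℝ → E → E} {Υ' : ℝ → E → E →L[𝕜] E} {T s : ℝ} {U : Set E} {u : E}
    (hU : U ∈ 𝓝 u) (hcont : ContinuousOn (fun p : ℝ × E => Υ p.1 p.2) (Ico 0 T ×ˢ U))
    (hflow : ∀ t ≥ (0:ℝ), ∀ s ≥ (0:ℝ), t + s < T → Υ (t + s) u = Υ t (Υ s u))
    (hder : ∀ r ∈ Ico 0 T, ∀ x ∈ U, HasFDerivAt (Υ r) (Υ' r x) x)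
    (hder_cont : ContinuousOn (fun p : ℝ × E => Υ' p.1 p.2) (Ico 0 T ×ˢ U))
    (hΥ_zero : Tendsto (fun t => Υ t u) (𝓝[>] 0) (𝓝 u)) (hs : 0 ≤ s) (hsT : s < T) :
    (fun t => (∫ r in (0:ℝ)..t, (Υ (r + s) u - Υ r u)) - (∫ r in (0:ℝ)..s, Υ' r u) (Υ t u - u))
      =o[𝓝[>] 0] fun t => Υ t u - u := by
  have hsub : uIcc 0 s ⊆ Ico 0 T := by
    rw [uIcc_of_le hs]; exact Icc_subset_Ico_right hsT
  have htaylor := isLittleO_integral_sub_sub_integral_fderiv hU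
    (fun r hr => hder r (hsub hr)) (hder_cont.mono (prod_mono hsub subset_rfl))
    fun w hw => ((hcont.uncurry_right (f := Υ) w hw).mono hsub).intervalIntegrable
  refine (htaylor.comp_tendsto hΥ_zero).congr' ?_ EventuallyEq.rfl
  filter_upwards [Ioo_mem_nhdsGT (sub_pos.2 hsT)] with t ⟨ht, htT⟩
  have hint : IntervalIntegrable (fun r => Υ r u) volume 0 (s + t) := by
    refine ((hcont.uncurry_right (f := Υ) u (mem_of_mem_nhds hU)).mono ?_).intervalIntegrable
    rw [uIcc_of_le (by linarith)]; exact Icc_subset_Ico_right (by linarith)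
  simp only [Function.comp_apply]
  rw [← integral_comp_add_right_sub_comm hs ht.le hint]
  congr 1
  refine integral_congr fun r hr => ?_
  rw [uIcc_of_le hs] at hr
  simp only [hflow r hr.1 t ht.le (by linarith [hr.2])]

theorem tendsto_inv_smul_semiflow_sub {𝕜 E : Type*} [RCLike 𝕜] [NormedAddCommGroup E]
    [NormedSpace 𝕜 E] [NormedSpace ℝ E] [IsScalarTower ℝ 𝕜 E] [CompleteSpace E]
    {Υ : ℝ → E → E} {Υ' : ℝ → E → E →L[𝕜] E} {T s : ℝ} {U : Set E} {u : E}
    (hU : U ∈ 𝓝 u) (hcont : ContinuousOn (fun p : ℝ × E => Υ p.1 p.2) (Ico 0 T ×ˢ U))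
    (h0 : Υ 0 u = u) (hflow : ∀ t ≥ (0:ℝ), ∀ s ≥ (0:ℝ), t + s < T → Υ (t + s) u = Υ t (Υ s u))
    (hder : ∀ r ∈ Ico 0 T, ∀ x ∈ U, HasFDerivAt (Υ r) (Υ' r x) x)
    (hder_cont : ContinuousOn (fun p : ℝ × E => Υ' p.1 p.2) (Ico 0 T ×ˢ U))
    (hs : 0 < s) (hsT : s < T) {N : E →L[𝕜] E}
    (hN : N.comp ((s⁻¹ : ℝ) • ∫ r in (0:ℝ)..s, Υ' r u) = ContinuousLinearMap.id 𝕜 E) :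
    Tendsto (fun t : ℝ => t⁻¹ • (Υ t u - u)) (𝓝[>] 0) (𝓝 (N (s⁻¹ • (Υ s u - u)))) := by
  have hT : 0 < T := hs.trans hsT
  have hΥu : ContinuousOn (fun r => Υ r u) (Ico 0 T) :=
    hcont.uncurry_right (f := Υ) u (mem_of_mem_nhds hU)
  have hΥ_zero : Tendsto (fun t => Υ t u) (𝓝[>] 0) (𝓝 u) := by
    simpa only [ContinuousWithinAt, h0] using
      (hΥu.continuousWithinAt ⟨le_rfl, hT⟩).mono_of_mem_nhdsWithin (Ico_mem_nhdsGT hT)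
  have hshift : ContinuousOn (fun r => Υ (r + s) u - Υ r u) (Ico 0 (T - s)) :=
    (hΥu.comp (continuous_add_const s).continuousOn fun r hr =>
      ⟨by linarith [hr.1], by linarith [hr.2]⟩).sub
      (hΥu.mono (Ico_subset_Ico_right (by linarith)))
  have hG := (tendsto_inv_smul_integral_nhdsGT (sub_pos.2 hsT) hshift).const_smul s⁻¹
  have hR := (isLittleO_semiflow_integral_sub_integral_fderiv hU hcont hflow hder hder_cont
    hΥ_zero hs.le hsT).const_smul_left s⁻¹
  refine tendsto_inv_smul_of_isLittleO (l := 𝓝[>] 0)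
    (eventually_mem_nhdsWithin.mono fun t ht => ne_of_gt ht)
    (G := fun t => s⁻¹ • ∫ r in (0:ℝ)..t, (Υ (r + s) u - Υ r u))
    (A := ((s⁻¹ : ℝ) • ∫ r in (0:ℝ)..s, Υ' r u).restrictScalars ℝ) (N := N.restrictScalars ℝ)
    (fun x => ContinuousLinearMap.ext_iff.1 hN x) ?_ ?_
  · simpa only [zero_add, h0, smul_comm s⁻¹] using hG
  · refine hR.congr_left fun t => ?_
    simp [smul_sub]

theorem stmt18_general (k : ℕ) (T : ℝ)
    (U : Set (Fin k → ℂ)) (hUopen : IsOpen U)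
    (Υ : ℝ → (Fin k → ℂ) → (Fin k → ℂ))
    (hcont : ContinuousOn (fun p : ℝ × (Fin k → ℂ) => Υ p.1 p.2) (Ico 0 T ×ˢ U))
    (h0 : ∀ u ∈ U, Υ 0 u = u)
    (hflow : ∀ t ≥ (0:ℝ), ∀ s ≥ (0:ℝ), t + s < T → ∀ u ∈ U,
      Υ (t + s) u = Υ t (Υ s u))
    -- the Jacobian ∂Υ/∂u, jointly continuous, equal to the identity at t = 0
    (Dm : ℝ → (Fin k → ℂ) → ((Fin k → ℂ) →L[ℂ] (Fin k → ℂ)))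
    (hDer : ∀ r ∈ Ico (0:ℝ) T, ∀ u ∈ U, HasFDerivAt (Υ r) (Dm r u) u)
    (hDcont : ContinuousOn (fun p : ℝ × (Fin k → ℂ) => Dm p.1 p.2) (Ico 0 T ×ˢ U))
    -- the averaged Jacobian
    (M : ℝ → (Fin k → ℂ) → ((Fin k → ℂ) →L[ℂ] (Fin k → ℂ)))
    (hM : ∀ s : ℝ, ∀ u : Fin k → ℂ,
      M s u = ((s : ℂ)⁻¹) • ∫ r in (0:ℝ)..s, Dm r u)
    (u : Fin k → ℂ) (hu : u ∈ U) (s₀ : ℝ) (hs₀ : s₀ ∈ Ioo 0 T)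
    (hMinv : ∀ s ∈ Ioo (0:ℝ) s₀, ∃ N : (Fin k → ℂ) →L[ℂ] (Fin k → ℂ),
      (M s u).comp N = ContinuousLinearMap.id ℂ (Fin k → ℂ) ∧
      N.comp (M s u) = ContinuousLinearMap.id ℂ (Fin k → ℂ)) :
    ∃ v : Fin k → ℂ,
      Filter.Tendsto (fun t : ℝ => (t⁻¹ : ℝ) • (Υ t u - u))
        (nhdsWithin 0 (Ioi 0)) (nhds v) ∧
      ∀ s ∈ Ioo (0:ℝ) s₀, ∀ N : (Fin k → ℂ) →L[ℂ] (Fin k → ℂ),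
        ((M s u).comp N = ContinuousLinearMap.id ℂ (Fin k → ℂ) ∧
         N.comp (M s u) = ContinuousLinearMap.id ℂ (Fin k → ℂ)) →
        v = N ((s⁻¹ : ℝ) • (Υ s u - u)) := by
  have hlim : ∀ s ∈ Ioo (0:ℝ) s₀, ∀ N : (Fin k → ℂ) →L[ℂ] (Fin k → ℂ),
      N.comp (M s u) = ContinuousLinearMap.id ℂ (Fin k → ℂ) →
      Filter.Tendsto (fun t : ℝ => (t⁻¹ : ℝ) • (Υ t u - u)) (𝓝[>] 0)
        (𝓝 (N ((s⁻¹ : ℝ) • (Υ s u - u)))) := by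
    rintro s ⟨hs, hss₀⟩ N hN
    have hM_real : M s u = (s⁻¹ : ℝ) • ∫ r in (0:ℝ)..s, Dm r u := by
      ext x i
      simp [hM, real_smul]
    rw [hM_real] at hN
    exact tendsto_inv_smul_semiflow_sub (hUopen.mem_nhds hu) hcont (h0 u hu)
      (fun t ht s hs h => hflow t ht s hs h u hu) hDer hDcont hs (hss₀.trans hs₀.2) hN
  have hhalf : s₀ / 2 ∈ Ioo 0 s₀ := ⟨half_pos hs₀.1, half_lt_self hs₀.1⟩
  obtain ⟨N, -, hN⟩ := hMinv _ hhalf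
  exact ⟨_, hlim _ hhalf N hN,
    fun s hs N' hN' => tendsto_nhds_unique (hlim _ hhalf N hN) (hlim s hs N' hN'.2)⟩

theorem stmt18 (k : ℕ) (T : ℝ) (hT : 0 < T)
    (U : Set (Fin k → ℂ)) (hUopen : IsOpen U)
    (Υ : ℝ → (Fin k → ℂ) → (Fin k → ℂ))
    (hcont : ContinuousOn (fun p : ℝ × (Fin k → ℂ) => Υ p.1 p.2) (Ico 0 T ×ˢ U))
    (h0 : ∀ u ∈ U, Υ 0 u = u)
    (hmaps : ∀ t ∈ Ico (0:ℝ) T, ∀ u ∈ U, Υ t u ∈ U)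
    (hflow : ∀ t ≥ (0:ℝ), ∀ s ≥ (0:ℝ), t + s < T → ∀ u ∈ U,
      Υ (t + s) u = Υ t (Υ s u))
    -- the Jacobian ∂Υ/∂u, jointly continuous, equal to the identity at t = 0
    (Dm : ℝ → (Fin k → ℂ) → ((Fin k → ℂ) →L[ℂ] (Fin k → ℂ)))
    (hDer : ∀ r ∈ Ico (0:ℝ) T, ∀ u ∈ U, HasFDerivAt (Υ r) (Dm r u) u)
    (hDcont : ContinuousOn (fun p : ℝ × (Fin k → ℂ) => Dm p.1 p.2) (Ico 0 T ×ˢ U))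
    (hD0 : ∀ u ∈ U, Dm 0 u = ContinuousLinearMap.id ℂ (Fin k → ℂ))
    -- the averaged Jacobian
    (M : ℝ → (Fin k → ℂ) → ((Fin k → ℂ) →L[ℂ] (Fin k → ℂ)))
    (hM : ∀ s : ℝ, ∀ u : Fin k → ℂ,
      M s u = ((s : ℂ)⁻¹) • ∫ r in (0:ℝ)..s, Dm r u)
    (u : Fin k → ℂ) (hu : u ∈ U) (s₀ : ℝ) (hs₀ : s₀ ∈ Ioo 0 T)
    (hMinv : ∀ s ∈ Ioo (0:ℝ) s₀, ∃ N : (Fin k → ℂ) →L[ℂ] (Fin k → ℂ),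
      (M s u).comp N = ContinuousLinearMap.id ℂ (Fin k → ℂ) ∧
      N.comp (M s u) = ContinuousLinearMap.id ℂ (Fin k → ℂ)) :
    ∃ v : Fin k → ℂ,
      Filter.Tendsto (fun t : ℝ => (t⁻¹ : ℝ) • (Υ t u - u))
        (nhdsWithin 0 (Ioi 0)) (nhds v) ∧
      ∀ s ∈ Ioo (0:ℝ) s₀, ∀ N : (Fin k → ℂ) →L[ℂ] (Fin k → ℂ),
        ((M s u).comp N = ContinuousLinearMap.id ℂ (Fin k → ℂ) ∧
         N.comp (M s u) = ContinuousLinearMap.id ℂ (Fin k → ℂ)) →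
        v = N ((s⁻¹ : ℝ) • (Υ s u - u)) :=
  stmt18_general k T U hUopen Υ hcont h0 hflow Dm hDer hDcont M hM u hu s₀ hs₀ hMinv
end
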